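/- arXiv:1808.01992 — 4 statements merged into one kernel-verified Lean document; each statement's English description precedes it below -/
import Mathlib

section
/- Let S be a finite set, σ : S → (0,1), and y : S → {0,1} with edge set Y = {q | y q = 1}. Among all labelings ŷ with exactly |Y| positive pixels, the cross-entropy cost C(ŷ) = -∑_p [ŷ p log σ p + (1 - ŷ p) log(1 - σ p)] is minimized by ŷ* if and only if ŷ* = f_L(y, m*) for some injection m* : Y → S minimizing ∑_{q∈Y} [log(1 - σ(m q)) - log(σ(m q))] over all injections m : Y → S. In particular, min over such ŷ of C(ŷ) equals C(0) + min over injections m of ∑_{q∈Y}[log(1 - σ(m q)) - log σ(m q)]. -/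
/-!
Since `C(ŷ) = C(0) + ∑_{ŷ p = 1} (log (1 - σ p) - log (σ p))`, the cost of a labeling depends
only on its set of positive pixels. The labelings with exactly `|Y|` positive pixels are exactly
the label realizations `f_L(y, m)` of injections `m : Y → S`, and the positive set of `f_L(y, m)`
is `m(Y)`, so `C (f_L(y, m)) = C(0) + ∑_{q ∈ Y} (log (1 - σ (m q)) - log (σ (m q)))`.
Minimizing `C` over such labelings is therefore the same as minimizing the assignment cost.
-/

open scoped Classical

open Finset Function

theorem crossEntropy_eq_add_sum_filter {S : Type*} [Fintype S] (σ : S → ℝ) (yhat : S → Bool) :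
    -(∑ p : S, ((if yhat p then (1 : ℝ) else 0) * Real.log (σ p)
        + (1 - if yhat p then (1 : ℝ) else 0) * Real.log (1 - σ p)))
      = -(∑ p : S, Real.log (1 - σ p))
        + ∑ p ∈ univ.filter (fun p => yhat p = true), (Real.log (1 - σ p) - Real.log (σ p)) := by
  rw [sum_filter, neg_eq_iff_eq_neg, neg_add, neg_neg, ← sum_neg_distrib, ← sum_add_distrib]
  refine sum_congr rfl fun p _ => ?_
  cases yhat p <;> simp

section LabelRealization

variable {S T : Type*}

/-- The label realization `f_L(y, m)`; the domain `T` plays the role of the edge set `Y`. -/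
noncomputable def labelRealization (m : T → S) : S → Bool := fun p => decide (∃ q, m q = p)

theorem labelRealization_eq_iff {m : T → S} {yhat : S → Bool} :
    labelRealization m = yhat ↔ ∀ p, yhat p = true ↔ ∃ q, m q = p := by
  simp only [funext_iff, labelRealization]
  exact forall_congr' fun p => by cases yhat p <;> simp

variable [Fintype S] [Fintype T]

theorem filter_labelRealization {m : T → S} (hm : Injective m) :
    univ.filter (fun p => labelRealization m p = true) = univ.map ⟨m, hm⟩ := by
  ext p
  simp [labelRealization]

theorem card_filter_labelRealization {m : T → S} (hm : Injective m) :
    (univ.filter fun p => labelRealization m p = true).card = Fintype.card T := by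
  rw [filter_labelRealization hm, card_map, card_univ]

theorem sum_filter_labelRealization {M : Type*} [AddCommMonoid M] (f : S → M) {m : T → S}
    (hm : Injective m) :
    ∑ p ∈ univ.filter (fun p => labelRealization m p = true), f p = ∑ q, f (m q) := by
  rw [filter_labelRealization hm, sum_map]
  rfl

theorem exists_injective_labelRealization_eq {yhat : S → Bool}
    (h : (univ.filter fun p => yhat p = true).card = Fintype.card T) :
    ∃ m : T → S, Injective m ∧ labelRealization m = yhat := by
  set F := univ.filter fun p => yhat p = true
  let e : T ≃ F := Fintype.equivOfCardEq (by rw [Fintype.card_coe, h])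
  refine ⟨fun q => e q, Subtype.val_injective.comp e.injective, ?_⟩
  refine labelRealization_eq_iff.2 fun p => ⟨fun hp => ⟨e.symm ⟨p, ?_⟩, by simp⟩, ?_⟩
  · simpa [F] using hp
  · rintro ⟨q, rfl⟩
    exact (mem_filter.1 (e q).2).2

theorem crossEntropy_labelRealization (σ : S → ℝ) {m : T → S} (hm : Injective m) :
    -(∑ p : S, ((if labelRealization m p then (1 : ℝ) else 0) * Real.log (σ p)
        + (1 - if labelRealization m p then (1 : ℝ) else 0) * Real.log (1 - σ p)))
      = -(∑ p : S, Real.log (1 - σ p))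
        + ∑ q, (Real.log (1 - σ (m q)) - Real.log (σ (m q))) := by
  rw [crossEntropy_eq_add_sum_filter, sum_filter_labelRealization _ hm]

end LabelRealization

theorem cross_entropy_min_iff_assignment_general {S : Type*} [Fintype S]
    (σ : S → ℝ) (y : S → Bool) :
    (∀ ystar : S → Bool,
      (Finset.univ.filter (fun p => ystar p = true)).card
        = (Finset.univ.filter (fun q => y q = true)).card →
      ((∀ yhat : S → Bool,
          (Finset.univ.filter (fun p => yhat p = true)).card
            = (Finset.univ.filter (fun q => y q = true)).card →
          -(∑ p : S, ((if ystar p then (1 : ℝ) else 0) * Real.log (σ p)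
              + (1 - if ystar p then (1 : ℝ) else 0) * Real.log (1 - σ p)))
          ≤ -(∑ p : S, ((if yhat p then (1 : ℝ) else 0) * Real.log (σ p)
              + (1 - if yhat p then (1 : ℝ) else 0) * Real.log (1 - σ p)))) ↔
        (∃ mstar : {q : S // y q = true} → S, Function.Injective mstar ∧
          (∀ m : {q : S // y q = true} → S, Function.Injective m →
            ∑ q : {q : S // y q = true},
                (Real.log (1 - σ (mstar q)) - Real.log (σ (mstar q)))
            ≤ ∑ q : {q : S // y q = true},
                (Real.log (1 - σ (m q)) - Real.log (σ (m q)))) ∧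
          (∀ p : S, ystar p = true ↔ ∃ q, mstar q = p))))
    ∧
    sInf {c : ℝ | ∃ yhat : S → Bool,
        (Finset.univ.filter (fun p => yhat p = true)).card
          = (Finset.univ.filter (fun q => y q = true)).card ∧
        c = -(∑ p : S, ((if yhat p then (1 : ℝ) else 0) * Real.log (σ p)
              + (1 - if yhat p then (1 : ℝ) else 0) * Real.log (1 - σ p)))}
    = -(∑ p : S, Real.log (1 - σ p))
      + sInf {c : ℝ | ∃ m : {q : S // y q = true} → S, Function.Injective m ∧
          c = ∑ q : {q : S // y q = true},
                (Real.log (1 - σ (m q)) - Real.log (σ (m q)))} := by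
  set Y := {q : S // y q = true}
  have hY : Fintype.card Y = (univ.filter fun q => y q = true).card := Fintype.card_subtype _
  obtain ⟨m₀, hm₀, hm₀_min⟩ := Set.exists_min_image {m : Y → S | Injective m}
    (fun m => ∑ q, (Real.log (1 - σ (m q)) - Real.log (σ (m q)))) (Set.toFinite _)
    ⟨Subtype.val, Subtype.val_injective⟩
  refine ⟨fun ystar hstar => ⟨fun hmin => ?_, ?_⟩, ?_⟩
  · obtain ⟨mstar, hmstar, rfl⟩ := exists_injective_labelRealization_eq (hstar.trans hY.symm)
    refine ⟨mstar, hmstar, fun m hm => ?_, labelRealization_eq_iff.1 rfl⟩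
    have := hmin _ ((card_filter_labelRealization hm).trans hY)
    rw [crossEntropy_labelRealization σ hmstar, crossEntropy_labelRealization σ hm] at this
    linarith
  · rintro ⟨mstar, hmstar, hmstar_min, hreal⟩ yhat hyhat
    obtain ⟨m, hm, rfl⟩ := exists_injective_labelRealization_eq (hyhat.trans hY.symm)
    rw [← labelRealization_eq_iff.2 hreal, crossEntropy_labelRealization σ hmstar,
      crossEntropy_labelRealization σ hm]
    linarith [hmstar_min m hm]
  · have hA : IsLeast {c : ℝ | ∃ m : Y → S, Injective m ∧
        c = ∑ q, (Real.log (1 - σ (m q)) - Real.log (σ (m q)))}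
        (∑ q, (Real.log (1 - σ (m₀ q)) - Real.log (σ (m₀ q)))) :=
      ⟨⟨m₀, hm₀, rfl⟩, by rintro _ ⟨m, hm, rfl⟩; exact hm₀_min m hm⟩
    rw [hA.csInf_eq]
    refine IsLeast.csInf_eq ⟨⟨labelRealization m₀, (card_filter_labelRealization hm₀).trans hY,
      (crossEntropy_labelRealization σ hm₀).symm⟩, ?_⟩
    rintro _ ⟨yhat, hyhat, rfl⟩
    obtain ⟨m, hm, rfl⟩ := exists_injective_labelRealization_eq (hyhat.trans hY.symm)
    rw [crossEntropy_labelRealization σ hm]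
    linarith [hm₀_min m hm]

/-- Lemma 2 of the paper: among labelings with exactly `|Y|` positive
pixels, the cross-entropy is minimized exactly by label realizations of injections
minimizing the assignment cost `∑_q [log(1-σ(m q)) - log σ(m q)]`; moreover the
constrained minimum of the cross-entropy equals `C(0)` plus the minimal assignment
cost. -/
theorem cross_entropy_min_iff_assignment {S : Type*} [Fintype S] [DecidableEq S]
    (σ : S → ℝ) (hσ : ∀ p, σ p ∈ Set.Ioo (0 : ℝ) 1) (y : S → Bool) :
    (∀ ystar : S → Bool,
      (Finset.univ.filter (fun p => ystar p = true)).card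
        = (Finset.univ.filter (fun q => y q = true)).card →
      ((∀ yhat : S → Bool,
          (Finset.univ.filter (fun p => yhat p = true)).card
            = (Finset.univ.filter (fun q => y q = true)).card →
          -(∑ p : S, ((if ystar p then (1 : ℝ) else 0) * Real.log (σ p)
              + (1 - if ystar p then (1 : ℝ) else 0) * Real.log (1 - σ p)))
          ≤ -(∑ p : S, ((if yhat p then (1 : ℝ) else 0) * Real.log (σ p)
              + (1 - if yhat p then (1 : ℝ) else 0) * Real.log (1 - σ p)))) ↔
        (∃ mstar : {q : S // y q = true} → S, Function.Injective mstar ∧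
          (∀ m : {q : S // y q = true} → S, Function.Injective m →
            ∑ q : {q : S // y q = true},
                (Real.log (1 - σ (mstar q)) - Real.log (σ (mstar q)))
            ≤ ∑ q : {q : S // y q = true},
                (Real.log (1 - σ (m q)) - Real.log (σ (m q)))) ∧
          (∀ p : S, ystar p = true ↔ ∃ q, mstar q = p))))
    ∧
    sInf {c : ℝ | ∃ yhat : S → Bool,
        (Finset.univ.filter (fun p => yhat p = true)).card
          = (Finset.univ.filter (fun q => y q = true)).card ∧
        c = -(∑ p : S, ((if yhat p then (1 : ℝ) else 0) * Real.log (σ p)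
              + (1 - if yhat p then (1 : ℝ) else 0) * Real.log (1 - σ p)))}
    = -(∑ p : S, Real.log (1 - σ p))
      + sInf {c : ℝ | ∃ m : {q : S // y q = true} → S, Function.Injective m ∧
          c = ∑ q : {q : S // y q = true},
                (Real.log (1 - σ (m q)) - Real.log (σ (m q)))} :=
  cross_entropy_min_iff_assignment_general σ y
end

section
/- Let S be a finite set, Y ⊆ S, and let c : S × Y → ℝ be a cost function depending only on the assigned target and source (e.g., c(p,q) = ‖p - q‖²/(2σ²) + log(1-σ p) - log σ p). Define for each injection m : Y → S the total cost T(m) = ∑_{q∈Y} c(m q, q), and for each labeling ŷ with |{ŷ = 1}| = |Y| define U(ŷ) = D(ŷ) + inf over injections m with image {ŷ = 1} of ∑_{q∈Y} d(m q, q), where c(p,q) = d(p,q) + e(p) and D(ŷ) = ∑_{p : ŷ p = 1} e(p). Then any injection m* minimizing T also yields a labeling f_L(y, m*) minimizing U. (Optimality of the relaxed assignment problem: Theorem 1 of the paper.) -/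
/-! The infimum defining `U(ŷ)` ranges over finitely many injections, and there is at least one
since `|{ŷ = 1}| = |Y|`; so it is attained by some `m` with image `{ŷ = 1}`, and then
`U(ŷ) = T(m) ≥ T(m*)`. On the other side, `m*` itself competes in the infimum for its own
labeling, so `U(f_L(y, m*)) ≤ T(m*)`. -/

theorem Finset.sum_filter_eq_sum_comp_of_range_eq {ι S M : Type*} [Fintype ι] [Fintype S]
    [AddCommMonoid M] {P : S → Prop} [DecidablePred P] {m : ι → S}
    (hm : Function.Injective m) (hrange : Set.range m = {p | P p}) (e : S → M) :
    ∑ p ∈ Finset.univ.filter P, e p = ∑ i, e (m i) := by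
  have : Finset.univ.filter P = Finset.univ.map ⟨m, hm⟩ := by
    ext p
    have hp : P p ↔ p ∈ Set.range m := by rw [hrange]; rfl
    simp [hp]
  rw [this, Finset.sum_map]
  rfl

theorem exists_injective_range_eq_of_card_eq {ι S : Type*} [Fintype ι] (s : Finset S)
    (h : Fintype.card ι = s.card) : ∃ m : ι → S, Function.Injective m ∧ Set.range m = s := by
  let eqv : ι ≃ s := Fintype.equivOfCardEq (by simpa using h)
  refine ⟨Subtype.val ∘ eqv, Subtype.val_injective.comp eqv.injective, ?_⟩
  rw [Set.range_comp, eqv.range_eq_univ, Set.image_univ, Subtype.range_coe]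

section
variable {ι S : Type*} [Finite ι] [Finite S] (f : (ι → S) → ℝ) (R : Set S)

theorem finite_setOf_injective_range_eq :
    {x | ∃ m : ι → S, Function.Injective m ∧ Set.range m = R ∧ x = f m}.Finite :=
  (Set.finite_range f).subset fun _ ⟨m, _, _, hx⟩ => ⟨m, hx.symm⟩

theorem csInf_setOf_injective_range_eq_le {m : ι → S} (hm : Function.Injective m)
    (hR : Set.range m = R) :
    sInf {x | ∃ m : ι → S, Function.Injective m ∧ Set.range m = R ∧ x = f m} ≤ f m :=
  csInf_le (finite_setOf_injective_range_eq f R).bddBelow ⟨m, hm, hR, rfl⟩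

theorem exists_injective_range_eq_csInf_eq
    (h : ∃ m : ι → S, Function.Injective m ∧ Set.range m = R) :
    ∃ m : ι → S, Function.Injective m ∧ Set.range m = R ∧
      sInf {x | ∃ m : ι → S, Function.Injective m ∧ Set.range m = R ∧ x = f m} = f m := by
  obtain ⟨m, hm, hR⟩ := h
  have hne : {x | ∃ m : ι → S, Function.Injective m ∧ Set.range m = R ∧ x = f m}.Nonempty :=
    ⟨f m, m, hm, hR, rfl⟩
  exact hne.csInf_mem (finite_setOf_injective_range_eq f R)

end

/-- Theorem 1 of the paper: if the injection `mstar` minimizes the joint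
assignment cost `T(m) = ∑_q [d(m q, q) + e(m q)]`, then the realized labeling
`f_L(y, mstar)` (which is `1` exactly on the range of `mstar`) minimizes
`U(yhat) = ∑_{p : yhat p = 1} e p + inf over injections with image {yhat = 1} of
∑_q d(m q, q)` among all labelings with `|Y|` positive pixels. -/
theorem relaxed_assignment_optimality {S : Type*} [Fintype S] [DecidableEq S]
    (Y : Finset S) (d : S → S → ℝ) (e : S → ℝ)
    (mstar : {q : S // q ∈ Y} → S) (hinj : Function.Injective mstar)
    (hmin : ∀ m : {q : S // q ∈ Y} → S, Function.Injective m →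
      ∑ q : {q : S // q ∈ Y}, (d (mstar q) q.1 + e (mstar q))
        ≤ ∑ q : {q : S // q ∈ Y}, (d (m q) q.1 + e (m q))) :
    ∀ yhat : S → Bool,
      (Finset.univ.filter (fun p => yhat p = true)).card = Y.card →
      (∑ p ∈ Finset.univ.filter (fun p => (p ∈ Set.range mstar : Prop)), e p)
        + sInf {x : ℝ | ∃ m : {q : S // q ∈ Y} → S, Function.Injective m ∧
            Set.range m = Set.range mstar ∧
            x = ∑ q : {q : S // q ∈ Y}, d (m q) q.1}
      ≤ (∑ p ∈ Finset.univ.filter (fun p => yhat p = true), e p)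
        + sInf {x : ℝ | ∃ m : {q : S // q ∈ Y} → S, Function.Injective m ∧
            Set.range m = {p : S | yhat p = true} ∧
            x = ∑ q : {q : S // q ∈ Y}, d (m q) q.1} := by
  intro yhat hcard
  let alignCost : ({q : S // q ∈ Y} → S) → ℝ := fun m => ∑ q, d (m q) q.1
  have hlabeling : ∃ m : {q : S // q ∈ Y} → S,
      Function.Injective m ∧ Set.range m = {p : S | yhat p = true} := by
    simpa using exists_injective_range_eq_of_card_eq (ι := {q : S // q ∈ Y})
      (Finset.univ.filter fun p => yhat p = true) (by rw [Fintype.card_coe, hcard])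
  obtain ⟨m, hm, hrange, hm_min⟩ := exists_injective_range_eq_csInf_eq alignCost _ hlabeling
  calc _ ≤ ∑ q, e (mstar q) + alignCost mstar := by
        rw [Finset.sum_filter_eq_sum_comp_of_range_eq hinj Set.ofPred_mem_eq.symm]
        exact add_le_add_right (csInf_setOf_injective_range_eq_le alignCost _ hinj rfl) _
    _ ≤ ∑ q, e (m q) + alignCost m := by
        simpa only [alignCost, Finset.sum_add_distrib, add_comm] using hmin m hm
    _ = _ := by
        rw [hm_min, Finset.sum_filter_eq_sum_comp_of_range_eq hm hrange]
end

section
/- Let S ⊆ ℝ² be finite, Y ⊆ S, σ : S → (0,1), σ₀ > 0, and define for each injection m : Y → S the cost E(m) = ∑_{q∈Y} [‖m q - q‖²/(2σ₀²) + log(1 - σ(m q)) - log σ(m q)]. Then the negative log-likelihood -log L(ŷ, W) of the SEAL objective, restricted to labelings ŷ with |{ŷ=1}| = |Y|, satisfies: min over ŷ of [inf over matchings of the distance term + cross-entropy C(ŷ)] = C(0) + min over injections m of E(m), where C(0) = -∑_{p∈S} log(1-σ p). -/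
open scoped Classical

/-!
Writing `C(ŷ) = C(0) + ∑_{ŷ p = 1} (log (1 - σ p) - log σ p)`, the cross-entropy of a labeling
becomes a sum over its positives. A labeling with `|Y|` positives together with a bijection from
`Y` onto them is the same thing as an injection `Y → S` (its image is the set of positives), and
the objective of the pair is `C(0) + E(m)`; minimizing first over the bijection and then over the
labeling therefore gives the minimum of `E` over injections.
-/

theorem neg_sum_ite_mul_add_one_sub_ite_mul {α : Type*} (S : Finset α) (yhat : α → Bool)
    (a b : α → ℝ) :
    -(∑ p ∈ S, ((if yhat p then (1 : ℝ) else 0) * a p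
        + (1 - if yhat p then (1 : ℝ) else 0) * b p))
      = -(∑ p ∈ S, b p) + ∑ p ∈ S.filter (fun p => yhat p = true), (b p - a p) := by
  rw [Finset.sum_filter, ← Finset.sum_neg_distrib, ← Finset.sum_neg_distrib,
    ← Finset.sum_add_distrib]
  refine Finset.sum_congr rfl fun p _ => ?_
  cases yhat p
  · simp
  · simp only [if_true]; ring

theorem sInf_setOf_exists_eq {α β : Type*} [InfSet α] (f : β → α) :
    sInf {x | ∃ b, x = f b} = ⨅ b, f b := by
  simp only [iInf, Set.range, eq_comm]

theorem Real.sInf_eq_add_sInf_of_forall_exists_le {A B : Set ℝ} {c : ℝ} (hB : B.Nonempty)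
    (hB' : BddBelow B) (hBA : ∀ b ∈ B, ∃ a ∈ A, a ≤ c + b)
    (hAB : ∀ a ∈ A, ∃ b ∈ B, c + b ≤ a) :
    sInf A = c + sInf B := by
  have hA : A.Nonempty := by
    obtain ⟨b, hb⟩ := hB
    obtain ⟨a, ha, -⟩ := hBA b hb
    exact ⟨a, ha⟩
  have hA' : BddBelow A := ⟨c + sInf B, fun a ha => by
    obtain ⟨b, hb, hba⟩ := hAB a ha
    linarith [csInf_le hB' hb]⟩
  apply le_antisymm
  · suffices sInf A - c ≤ sInf B by linarith
    refine le_csInf hB fun b hb => ?_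
    obtain ⟨a, ha, hab⟩ := hBA b hb
    linarith [csInf_le hA' ha]
  · refine le_csInf hA fun a ha => ?_
    obtain ⟨b, hb, hba⟩ := hAB a ha
    linarith [csInf_le hB' hb]

theorem Finset.sum_eq_sum_equiv {α ι M : Type*} [Fintype ι] [AddCommMonoid M] {P : Finset α}
    (e : ι ≃ {p // p ∈ P}) (f : α → M) :
    ∑ p ∈ P, f p = ∑ i, f (e i) :=
  (P.sum_coe_sort f).symm.trans (e.sum_comp (fun p => f p)).symm

theorem exists_equiv_filter_of_injective {α ι : Type*} {S : Finset α} {m : ι → α}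
    (hm : Function.Injective m) (hmS : ∀ i, m i ∈ S) :
    ∃ yhat : α → Bool, ∃ e : ι ≃ {p // p ∈ S.filter (fun p => yhat p = true)},
      ∀ i, (e i : α) = m i := by
  refine ⟨fun p => decide (p ∈ Set.range m),
    (Equiv.ofInjective m hm).trans (Equiv.subtypeEquivRight fun p => ?_), fun i => rfl⟩
  simp only [Finset.mem_filter, decide_eq_true_eq, iff_and_self]
  rintro ⟨i, rfl⟩
  exact hmS i

theorem sInf_labeling_matching_eq_sInf_assignment {α ι : Type*} [Fintype ι] (S : Finset α)
    (hcard : Fintype.card ι ≤ S.card) (d : ι → α → ℝ) (w : α → ℝ) (c : ℝ) :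
    sInf {u : ℝ | ∃ yhat : α → Bool,
        (S.filter (fun p => yhat p = true)).card = Fintype.card ι ∧
        u = sInf {x : ℝ | ∃ e : ι ≃ {p // p ∈ S.filter (fun p => yhat p = true)},
              x = ∑ i, d i (e i)}
          + (c + ∑ p ∈ S.filter (fun p => yhat p = true), w p)}
    = c + sInf {x : ℝ | ∃ m : ι → α, Function.Injective m ∧ (∀ i, m i ∈ S) ∧
          x = ∑ i, (d i (m i) + w (m i))} := by
  apply Real.sInf_eq_add_sInf_of_forall_exists_le
  · obtain ⟨j⟩ := Function.Embedding.nonempty_of_card_le (by simpa using hcard :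
      Fintype.card ι ≤ Fintype.card S)
    exact ⟨_, fun i => j i, fun _ _ h => j.injective (Subtype.ext h), fun i => (j i).2, rfl⟩
  · refine ((Set.Finite.pi' fun _ => S.finite_toSet).image
      fun m => ∑ i, (d i (m i) + w (m i))).bddBelow.mono ?_
    rintro _ ⟨m, -, hmS, rfl⟩
    exact ⟨m, hmS, rfl⟩
  · rintro _ ⟨m, hm, hmS, rfl⟩
    obtain ⟨yhat, e, he⟩ := exists_equiv_filter_of_injective hm hmS
    refine ⟨_, ⟨yhat, by simpa using (Fintype.card_congr e).symm, rfl⟩, ?_⟩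
    rw [sInf_setOf_exists_eq, Finset.sum_eq_sum_equiv e, Finset.sum_add_distrib]
    have hle := ciInf_le (Set.finite_range
      fun e : ι ≃ {p // p ∈ S.filter (fun p => yhat p = true)} => ∑ i, d i (e i)).bddBelow e
    simp only [he] at hle ⊢
    linarith
  · rintro _ ⟨yhat, hcard, rfl⟩
    have : Nonempty (ι ≃ {p // p ∈ S.filter (fun p => yhat p = true)}) :=
      ⟨Fintype.equivOfCardEq (by simpa using hcard.symm)⟩
    obtain ⟨e, he⟩ := exists_eq_ciInf_of_finite
      (f := fun e : ι ≃ {p // p ∈ S.filter (fun p => yhat p = true)} => ∑ i, d i (e i))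
    refine ⟨_, ⟨fun i => e i, fun _ _ h => e.injective (Subtype.ext h),
      fun i => (Finset.mem_filter.mp (e i).2).1, rfl⟩, ?_⟩
    rw [sInf_setOf_exists_eq, ← he, Finset.sum_eq_sum_equiv e, Finset.sum_add_distrib]
    linarith

theorem seal_objective_eq_assignment_general (S : Finset (EuclideanSpace ℝ (Fin 2)))
    (Y : Finset (EuclideanSpace ℝ (Fin 2))) (hYS : Y ⊆ S)
    (σ : EuclideanSpace ℝ (Fin 2) → ℝ)
    (σ₀ : ℝ) :
    sInf {u : ℝ | ∃ yhat : EuclideanSpace ℝ (Fin 2) → Bool,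
        (S.filter (fun p => yhat p = true)).card = Y.card ∧
        u = sInf {x : ℝ | ∃ m : {q // q ∈ Y} ≃ {p // p ∈ S.filter (fun p => yhat p = true)},
              x = ∑ q : {q // q ∈ Y},
                ‖(m q : EuclideanSpace ℝ (Fin 2)) - (q : EuclideanSpace ℝ (Fin 2))‖ ^ 2
                  / (2 * σ₀ ^ 2)}
          + -(∑ p ∈ S, ((if yhat p then (1 : ℝ) else 0) * Real.log (σ p)
              + (1 - if yhat p then (1 : ℝ) else 0) * Real.log (1 - σ p)))}
    = -(∑ p ∈ S, Real.log (1 - σ p))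
      + sInf {x : ℝ | ∃ m : {q // q ∈ Y} → EuclideanSpace ℝ (Fin 2),
          Function.Injective m ∧ (∀ q, m q ∈ S) ∧
          x = ∑ q : {q // q ∈ Y},
            (‖m q - (q : EuclideanSpace ℝ (Fin 2))‖ ^ 2 / (2 * σ₀ ^ 2)
              + Real.log (1 - σ (m q)) - Real.log (σ (m q)))} := by
  simp only [neg_sum_ite_mul_add_one_sub_ite_mul, add_sub_assoc]
  rw [← Fintype.card_coe Y]
  exact sInf_labeling_matching_eq_sInf_assignment (ι := {q // q ∈ Y}) S
    (by simpa using Finset.card_le_card hYS)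
    (fun q p => ‖p - (q : EuclideanSpace ℝ (Fin 2))‖ ^ 2 / (2 * σ₀ ^ 2))
    (fun p => Real.log (1 - σ p) - Real.log (σ p)) _

/-- the constrained two-level SEAL minimization (over labelings with the
same number of positives as `Y`, adding the best matching distance cost to the
cross-entropy) equals `C(0)` plus the optimal value of the single min-cost assignment
problem with costs `E(m)`. -/
theorem seal_objective_eq_assignment (S : Finset (EuclideanSpace ℝ (Fin 2)))
    (Y : Finset (EuclideanSpace ℝ (Fin 2))) (hYS : Y ⊆ S)
    (σ : EuclideanSpace ℝ (Fin 2) → ℝ) (hσ : ∀ p ∈ S, σ p ∈ Set.Ioo (0 : ℝ) 1)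
    (σ₀ : ℝ) (hσ₀ : 0 < σ₀) :
    sInf {u : ℝ | ∃ yhat : EuclideanSpace ℝ (Fin 2) → Bool,
        (S.filter (fun p => yhat p = true)).card = Y.card ∧
        u = sInf {x : ℝ | ∃ m : {q // q ∈ Y} ≃ {p // p ∈ S.filter (fun p => yhat p = true)},
              x = ∑ q : {q // q ∈ Y},
                ‖(m q : EuclideanSpace ℝ (Fin 2)) - (q : EuclideanSpace ℝ (Fin 2))‖ ^ 2
                  / (2 * σ₀ ^ 2)}
          + -(∑ p ∈ S, ((if yhat p then (1 : ℝ) else 0) * Real.log (σ p)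
              + (1 - if yhat p then (1 : ℝ) else 0) * Real.log (1 - σ p)))}
    = -(∑ p ∈ S, Real.log (1 - σ p))
      + sInf {x : ℝ | ∃ m : {q // q ∈ Y} → EuclideanSpace ℝ (Fin 2),
          Function.Injective m ∧ (∀ q, m q ∈ S) ∧
          x = ∑ q : {q // q ∈ Y},
            (‖m q - (q : EuclideanSpace ℝ (Fin 2))‖ ^ 2 / (2 * σ₀ ^ 2)
              + Real.log (1 - σ (m q)) - Real.log (σ (m q)))} :=
  seal_objective_eq_assignment_general S Y hYS σ σ₀
end

section
/- Let h ∈ (0,1) and consider the weighted binary cross-entropy with positive-class weight β > 1: ℓ(ŷ, h) = -β ŷ log h - (1-ŷ) log(1-h). For a pixel with true label ŷ = 0, the prediction h* minimizing the expected loss when the label is flipped to 1 with probability ε ∈ (0,1) (label noise) is h* = βε/(βε + 1 - ε), which is strictly increasing in β. Hence, under label noise, larger positive-class weights β strictly increase the optimal predicted edge probability at non-edge pixels (more false positives). -/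
open Real

/-! The expected loss is `-(p log h + q log (1 - h))` with `p = βε` and `q = 1 - ε`, and by the
Gibbs inequality `log y ≤ y - 1` the binary cross-entropy `p log h + q log (1 - h)` is maximised
at `h = p / (p + q)`. Monotonicity in `β` is that of `t ↦ t / (t + q)`. -/

lemma mul_log_le_mul_log_div_add {a s x : ℝ} (ha : 0 < a) (hs : 0 < s) (hx : 0 < x) :
    a * log x ≤ a * log (a / s) + s * x - a := by
  have hgibbs : log (s * x / a) ≤ s * x / a - 1 := log_le_sub_one_of_pos (by positivity)
  have hsplit : log (s * x / a) = log x - log (a / s) := by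
    rw [← log_div hx.ne' (by positivity)]
    congr 1
    field_simp
  have hscaled := mul_le_mul_of_nonneg_left hgibbs ha.le
  rw [hsplit, mul_sub_one, mul_div_cancel₀ _ ha.ne'] at hscaled
  linarith

lemma mul_log_add_mul_log_one_sub_le {p q h : ℝ} (hp : 0 < p) (hq : 0 < q)
    (hh : h ∈ Set.Ioo (0 : ℝ) 1) :
    p * log h + q * log (1 - h) ≤ p * log (p / (p + q)) + q * log (q / (p + q)) := by
  have hpq : 0 < p + q := by positivity
  have hpos := mul_log_le_mul_log_div_add hp hpq hh.1
  have hneg := mul_log_le_mul_log_div_add hq hpq (sub_pos.2 hh.2)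
  linarith

lemma div_add_mem_Ioo {p q : ℝ} (hp : 0 < p) (hq : 0 < q) :
    p / (p + q) ∈ Set.Ioo (0 : ℝ) 1 :=
  ⟨by positivity, (div_lt_one (by positivity)).2 (by linarith)⟩

lemma one_sub_div_add {p q : ℝ} (hpq : p + q ≠ 0) : 1 - p / (p + q) = q / (p + q) := by
  field_simp
  ring

lemma div_add_lt_div_add {t t' q : ℝ} (hq : 0 < q) (ht : 0 < t + q) (htt' : t < t') :
    t / (t + q) < t' / (t' + q) := by
  rw [div_lt_div_iff₀ ht (by linarith)]
  nlinarith

/-- under label-flip noise rate `ε`, the weighted cross-entropy with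
positive-class weight `β > 1` has optimal prediction `h* = βε/(βε + 1 - ε)` at a true
non-edge pixel, and `h*` is strictly increasing in `β`. -/
theorem weighted_ce_noisy_minimizer (β ε : ℝ) (hβ : 1 < β) (hε : ε ∈ Set.Ioo (0 : ℝ) 1) :
    (β * ε / (β * ε + 1 - ε) ∈ Set.Ioo (0 : ℝ) 1)
    ∧ (∀ h ∈ Set.Ioo (0 : ℝ) 1,
        ε * (-(β * Real.log (β * ε / (β * ε + 1 - ε))))
          + (1 - ε) * (-Real.log (1 - β * ε / (β * ε + 1 - ε)))
        ≤ ε * (-(β * Real.log h)) + (1 - ε) * (-Real.log (1 - h)))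
    ∧ (∀ β' : ℝ, β < β' →
        β * ε / (β * ε + 1 - ε) < β' * ε / (β' * ε + 1 - ε)) := by
  obtain ⟨hε0, hε1⟩ := hε
  have hp : 0 < β * ε := mul_pos (by linarith) hε0
  have hq : 0 < 1 - ε := sub_pos.2 hε1
  have hden (b : ℝ) : b * ε + 1 - ε = b * ε + (1 - ε) := by ring
  simp only [hden]
  refine ⟨div_add_mem_Ioo hp hq, fun h hh => ?_, fun β' hββ' => ?_⟩
  · rw [one_sub_div_add (by positivity)]
    have hgibbs := mul_log_add_mul_log_one_sub_le hp hq hh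
    linarith
  · exact div_add_lt_div_add hq (by positivity) (by gcongr)
end
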